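/- Let k be a field and σ a type. In MvPolynomial (σ × ℕ) k with the derivation d determined by d (X (i, j)) = X (i, j+1), let W be the smallest k-submodule containing all variables X (i, 0) and closed under the product a ∘ b := a * d b. Then W equals the k-span of the set of monomials X (i₁, j₁) * X (i₂, j₂) * ⋯ * X (i_m, j_m) with m ≥ 1, i₁, …, i_m ∈ σ, j₁, …, j_m ∈ ℕ and j₁ + j₂ + ⋯ + j_m = m − 1. -/

import Mathlib

/-!
Give `X (i, j)` the weight `j - 1`, so that the balanced monomials are exactly the monomials of
weight `-1`. Since `d` raises the weight by one, `a * d b` has weight `-1` whenever `a` and `b`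
do, hence `novikovSpan` lies in the span of the balanced monomials.

Conversely, a balanced monomial of degree `n + 1` is `X (i, 0) * M` with `M` of degree `n` and
weight `0`; assume all balanced monomials of degree `n` lie in `novikovSpan`. If `M` contains
`X (i', 1)`, say `M = X (i', 1) * M'`, then `X (i, 0) * M = (X (i, 0) * M') ∘ X (i', 0)`. If
`M = X (i', j + 1) * M'`, then `X (i, 0) ∘ (X (i', j) * M')` is `X (i, 0) * M` plus
`X (i, 0) * X (i', j) * d M'`, and `d M'` is a combination of monomials of the same degree and
weight one higher; so induction on `j` shows `X (i, 0) * M ∈ novikovSpan`.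
-/

/-- The derivation `d` of the free differential commutative algebra
`MvPolynomial (σ × ℕ) k` with `d (X (i, j)) = X (i, j + 1)`. -/
noncomputable def diffD (k : Type) [Field k] (σ : Type) :
    Derivation k (MvPolynomial (σ × ℕ) k) (MvPolynomial (σ × ℕ) k) :=
  MvPolynomial.mkDerivation k (fun p : σ × ℕ => MvPolynomial.X (p.1, p.2 + 1))

/-- The smallest `k`-submodule of `MvPolynomial (σ × ℕ) k` containing all the variables
`X (i, 0)` and closed under the Novikov product `a ∘ b = a * d b`: the image of the free
Novikov algebra on `σ` under the Dzhumadildaev–Löfwall embedding. -/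
noncomputable def novikovSpan (k : Type) [Field k] (σ : Type) :
    Submodule k (MvPolynomial (σ × ℕ) k) :=
  sInf {W : Submodule k (MvPolynomial (σ × ℕ) k) |
    (∀ i : σ, MvPolynomial.X ((i, 0) : σ × ℕ) ∈ W) ∧
    ∀ a ∈ W, ∀ b ∈ W, a * diffD k σ b ∈ W}

open MvPolynomial Finsupp

namespace MvPolynomial

variable {R σ M : Type*} [CommSemiring R] [AddCommMonoid M] {w : σ → M} {c : M}

theorem isWeightedHomogeneous_derivation_monomial
    (D : Derivation R (MvPolynomial σ R) (MvPolynomial σ R))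
    (hD : ∀ i, (D (X i)).IsWeightedHomogeneous w (w i + c)) (s : σ →₀ ℕ) :
    (D (monomial s 1)).IsWeightedHomogeneous w (weight w s + c) := by
  induction s using Finsupp.induction_linear with
  | zero => simpa using isWeightedHomogeneous_zero R w c
  | add f g hf hg =>
    rw [← one_mul (1 : R), ← monomial_mul, D.leibniz, map_add, smul_eq_mul, smul_eq_mul]
    refine IsWeightedHomogeneous.add ?_ ?_
    · simpa only [add_assoc] using (isWeightedHomogeneous_monomial w f 1 rfl).mul hg
    · simpa only [add_assoc, add_left_comm] using
        (isWeightedHomogeneous_monomial w g 1 rfl).mul hf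
  | single i n =>
    rw [← X_pow_eq_monomial, D.leibniz_pow, weight_single]
    cases n with
    | zero => simpa using isWeightedHomogeneous_zero R w _
    | succ n =>
      rw [Nat.add_sub_cancel, show (n + 1) • w i + c = n • w i + (w i + c) by
        rw [succ_nsmul, add_assoc]]
      exact nsmul_mem (S := weightedHomogeneousSubmodule R w _)
        (((isWeightedHomogeneous_X R w i).pow n).mul (hD i)) _

theorem IsWeightedHomogeneous.derivation
    {D : Derivation R (MvPolynomial σ R) (MvPolynomial σ R)}
    (hD : ∀ i, (D (X i)).IsWeightedHomogeneous w (w i + c))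
    {φ : MvPolynomial σ R} {m : M} (hφ : φ.IsWeightedHomogeneous w m) :
    (D φ).IsWeightedHomogeneous w (m + c) := by
  induction hφ using IsWeightedHomogeneous.induction_on with
  | zero => simpa using isWeightedHomogeneous_zero R w _
  | add p q _ _ hp hq => simpa using hp.add hq
  | monomial s r hs =>
    rw [← hs, ← mul_one r, ← smul_eq_mul, ← smul_monomial, D.map_smul]
    exact Submodule.smul_mem (weightedHomogeneousSubmodule R w _) r
      (isWeightedHomogeneous_derivation_monomial D hD s)

theorem mem_span_monomial_of_forall_mem_support {P : (σ →₀ ℕ) → Prop}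
    {p : MvPolynomial σ R} (hp : ∀ s ∈ p.support, P s) :
    p ∈ Submodule.span R ((monomial · 1) '' {s | P s}) := by
  rw [p.as_sum]
  refine Submodule.sum_mem _ fun s hs => ?_
  rw [← mul_one (coeff s p), ← smul_eq_mul, ← smul_monomial]
  exact Submodule.smul_mem _ _ (Submodule.subset_span ⟨s, hp s hs, rfl⟩)

end MvPolynomial

namespace Finsupp

variable {α M : Type*}

theorem exists_ne_zero_and_neg_of_weight_neg [AddCommGroup M] [LinearOrder M]
    [IsOrderedAddMonoid M] {w : α → M} {f : α →₀ ℕ} (h : weight w f < 0) :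
    ∃ a, f a ≠ 0 ∧ w a < 0 := by
  by_contra! hw
  refine (Finset.sum_nonneg fun a ha => ?_).not_gt h
  exact nsmul_nonneg (hw a (mem_support_iff.1 ha)) _

theorem exists_ne_zero_and_nonneg_of_weight_nonneg [AddCommGroup M] [LinearOrder M]
    [IsOrderedAddMonoid M] {w : α → M} {f : α →₀ ℕ} (hf : f ≠ 0) (h : 0 ≤ weight w f) :
    ∃ a, f a ≠ 0 ∧ 0 ≤ w a := by
  by_contra! hw
  refine (Finset.sum_neg (fun a ha => ?_) (support_nonempty_iff.2 hf)).not_ge h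
  exact nsmul_neg (hw a (mem_support_iff.1 ha)) (mem_support_iff.1 ha)

theorem exists_fin_sum_single_eq (f : α →₀ ℕ) :
    ∃ (m : ℕ) (a : Fin m → α), ∑ t, single (a t) 1 = f := by
  induction f using Finsupp.induction_linear with
  | zero => exact ⟨0, Fin.elim0, rfl⟩
  | add f g hf hg =>
    obtain ⟨m, a, rfl⟩ := hf
    obtain ⟨n, b, rfl⟩ := hg
    exact ⟨m + n, Fin.append a b, by simp [Fin.sum_univ_add]⟩
  | single a n => exact ⟨n, fun _ => a, by simp⟩

end Finsupp

def novikovWeight (σ : Type) : σ × ℕ → ℤ := fun p => p.2 - 1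

namespace Novikov

variable {k : Type} [Field k] {σ : Type}

local notation "ω" => novikovWeight σ

theorem diffD_X (p : σ × ℕ) : diffD k σ (X p) = X (p.1, p.2 + 1) :=
  mkDerivation_X _ _ _

theorem weight_single_add (p : σ × ℕ) (u : σ × ℕ →₀ ℕ) :
    weight ω (single p 1 + u) = (p.2 : ℤ) - 1 + weight ω u := by
  simp [weight_single, novikovWeight]

theorem isWeightedHomogeneous_diffD {φ : MvPolynomial (σ × ℕ) k} {m : ℤ}
    (hφ : φ.IsWeightedHomogeneous ω m) : (diffD k σ φ).IsWeightedHomogeneous ω (m + 1) :=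
  hφ.derivation fun p => by
    rw [diffD_X]
    convert isWeightedHomogeneous_X k ω _ using 1
    simp [novikovWeight]

theorem isHomogeneous_diffD {φ : MvPolynomial (σ × ℕ) k} {n : ℕ} (hφ : φ.IsHomogeneous n) :
    (diffD k σ φ).IsHomogeneous n := by
  rw [← add_zero n]
  exact IsWeightedHomogeneous.derivation (fun p => by
    simpa [diffD_X] using isWeightedHomogeneous_X k (1 : σ × ℕ → ℕ) (p.1, p.2 + 1)) hφ

theorem X_mem_novikovSpan (i : σ) : (X (i, 0) : MvPolynomial (σ × ℕ) k) ∈ novikovSpan k σ :=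
  Submodule.mem_sInf.2 fun _ hW => hW.1 i

theorem mul_diffD_mem_novikovSpan {a b : MvPolynomial (σ × ℕ) k} (ha : a ∈ novikovSpan k σ)
    (hb : b ∈ novikovSpan k σ) : a * diffD k σ b ∈ novikovSpan k σ :=
  Submodule.mem_sInf.2 fun W hW =>
    hW.2 a (Submodule.mem_sInf.1 ha W hW) b (Submodule.mem_sInf.1 hb W hW)

theorem novikovSpan_le_weightedHomogeneousSubmodule :
    novikovSpan k σ ≤ weightedHomogeneousSubmodule k ω (-1) :=
  sInf_le ⟨fun i => isWeightedHomogeneous_X k ω (i, 0), fun _ ha _ hb => by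
    simpa using ha.mul (isWeightedHomogeneous_diffD hb)⟩

theorem X_mul_X_mul_monomial_mem_novikovSpan {n : ℕ}
    (ih : ∀ s : σ × ℕ →₀ ℕ, s.degree = n → weight ω s = -1 →
      monomial s (1 : k) ∈ novikovSpan k σ) (i : σ) (j : ℕ) (i' : σ) {u : σ × ℕ →₀ ℕ}
    (hdeg : u.degree + 1 = n) (hu : weight ω u = -j) :
    X (i, 0) * (X (i', j + 1) * monomial u (1 : k)) ∈ novikovSpan k σ := by
  induction j generalizing i' u with
  | zero =>
    have hbal : X (i, 0) * monomial u (1 : k) ∈ novikovSpan k σ := by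
      rw [← pow_one (X _), ← monomial_single_add]
      exact ih _ (by rw [map_add, degree_single]; omega) (by simp [weight_single_add, hu])
    convert mul_diffD_mem_novikovSpan hbal (X_mem_novikovSpan i') using 1
    rw [diffD_X]
    ring
  | succ j IH =>
    have hbal : X (i', j + 1) * monomial u (1 : k) ∈ novikovSpan k σ := by
      rw [← pow_one (X _), ← monomial_single_add]
      exact ih _ (by rw [map_add, degree_single]; omega) (by simp [weight_single_add, hu])
    have hcross : diffD k σ (monomial u 1) ∈
        (novikovSpan k σ).comap (LinearMap.mulLeft k (X (i, 0) * X (i', j + 1))) := by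
      refine Submodule.span_le.2 ?_ (mem_span_monomial_of_forall_mem_support
        (P := fun s => s.degree + 1 = n ∧ weight ω s = -j) fun s hs => ?_)
      · rintro _ ⟨u', ⟨hdeg', hu'⟩, rfl⟩
        simpa [mul_assoc] using IH i' hdeg' hu'
      · have hs := MvPolynomial.mem_support_iff.1 hs
        refine ⟨?_, ?_⟩
        · rw [← hdeg, ← isHomogeneous_diffD (isHomogeneous_monomial (1 : k) rfl) hs,
            degree_eq_weight_one]
          rfl
        · rw [isWeightedHomogeneous_diffD (isWeightedHomogeneous_monomial ω u (1 : k) rfl) hs,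
            hu]
          push_cast
          ring
    have hsum := mul_diffD_mem_novikovSpan (X_mem_novikovSpan i) hbal
    rw [Derivation.leibniz, diffD_X, smul_eq_mul, smul_eq_mul, mul_add] at hsum
    convert Submodule.sub_mem _ hsum hcross using 1
    simp only [LinearMap.mulLeft_apply]
    ring

theorem X_mul_monomial_mem_novikovSpan {n : ℕ}
    (ih : ∀ s : σ × ℕ →₀ ℕ, s.degree = n → weight ω s = -1 →
      monomial s (1 : k) ∈ novikovSpan k σ)
    (i : σ) {v : σ × ℕ →₀ ℕ} (hdeg : v.degree = n)
    (hv : weight ω v = 0) : X (i, 0) * monomial v (1 : k) ∈ novikovSpan k σ := by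
  rcases eq_or_ne v 0 with rfl | hv0
  · simpa using X_mem_novikovSpan i
  obtain ⟨⟨i', j'⟩, hp, hj'⟩ := exists_ne_zero_and_nonneg_of_weight_nonneg hv0 hv.ge
  obtain ⟨j, rfl⟩ : ∃ j, j' = j + 1 :=
    Nat.exists_eq_add_one.2 (by simp only [novikovWeight] at hj'; omega)
  obtain ⟨u, rfl⟩ := exists_add_of_le (single_le_iff.2 (Nat.one_le_iff_ne_zero.2 hp))
  rw [monomial_single_add, pow_one]
  refine X_mul_X_mul_monomial_mem_novikovSpan ih i j i' ?_ ?_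
  · simpa [degree_single, add_comm] using hdeg
  · rw [weight_single_add] at hv
    push_cast at hv
    linarith

theorem monomial_mem_novikovSpan {s : σ × ℕ →₀ ℕ} (hs : weight ω s = -1) :
    monomial s (1 : k) ∈ novikovSpan k σ := by
  induction hn : s.degree using Nat.strong_induction_on generalizing s with
  | _ n ih =>
  obtain ⟨⟨i, j⟩, hp, hj⟩ := exists_ne_zero_and_neg_of_weight_neg (hs.trans_lt (by norm_num))
  obtain rfl : j = 0 := by simp only [novikovWeight] at hj; omega
  obtain ⟨v, rfl⟩ := exists_add_of_le (single_le_iff.2 (Nat.one_le_iff_ne_zero.2 hp))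
  rw [monomial_single_add, pow_one]
  rw [map_add, degree_single] at hn
  refine X_mul_monomial_mem_novikovSpan (fun s' hdeg' hs' => ih _ (by omega) hs' hdeg') i rfl
    ?_
  simpa [weight_single_add] using hs

theorem weight_sum_single {m : ℕ} (ij : Fin m → σ × ℕ) :
    weight ω (∑ t, single (ij t) 1) = ((∑ t, (ij t).2 : ℕ) : ℤ) - m := by
  simp [weight_single, novikovWeight, Finset.sum_sub_distrib]

theorem setOf_balanced_prod_eq_image_monomial :
    {x : MvPolynomial (σ × ℕ) k |
        ∃ m : ℕ, 1 ≤ m ∧ ∃ ij : Fin m → σ × ℕ,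
          (∑ t : Fin m, (ij t).2) = m - 1 ∧
          x = ∏ t : Fin m, MvPolynomial.X (ij t)} =
      (monomial · 1) '' {s | weight ω s = -1} := by
  ext x
  constructor
  · rintro ⟨m, hm, ij, hsum, rfl⟩
    refine ⟨∑ t, single (ij t) 1, ?_, monomial_sum_one _ _⟩
    rw [Set.mem_ofPred_eq, weight_sum_single]
    omega
  · rintro ⟨s, hs, rfl⟩
    obtain ⟨m, ij, rfl⟩ := exists_fin_sum_single_eq s
    rw [Set.mem_ofPred_eq, weight_sum_single] at hs
    exact ⟨m, by omega, ij, by omega, monomial_sum_one _ _⟩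

end Novikov

/-- The image of the free Novikov algebra inside the free differential commutative algebra
is spanned by the monomials `X (i₁, j₁) ⋯ X (i_m, j_m)` with `m ≥ 1` and
`j₁ + ⋯ + j_m = m - 1`. -/
theorem novikovSpan_eq_span_of_balanced_monomials
    (k : Type) [Field k] (σ : Type) :
    novikovSpan k σ = Submodule.span k
      {x : MvPolynomial (σ × ℕ) k |
        ∃ m : ℕ, 1 ≤ m ∧ ∃ ij : Fin m → σ × ℕ,
          (∑ t : Fin m, (ij t).2) = m - 1 ∧
          x = ∏ t : Fin m, MvPolynomial.X (ij t)} := by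
  rw [Novikov.setOf_balanced_prod_eq_image_monomial]
  refine le_antisymm (fun p hp => ?_) (Submodule.span_le.2 ?_)
  · exact mem_span_monomial_of_forall_mem_support fun s hs =>
      Novikov.novikovSpan_le_weightedHomogeneousSubmodule hp (MvPolynomial.mem_support_iff.1 hs)
  · rintro _ ⟨s, hs, rfl⟩
    exact Novikov.monomial_mem_novikovSpan hs
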